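/- arXiv:1608.08484 — 6 statements merged into one kernel-verified Lean document; each statement's English description precedes it below -/
import Mathlib

section
/- Let p̄ be the payment vector defined by p̄_j = c_j(1 - x̂_j) for j < s, p̄_j = 0 for j > s, and p̄_s = (c_s/π_s)(x* - Σ_{j<s} π_j - Σ_{j≥s} π_j x̂_j), where s is the critical item. Then p̄ is an optimal solution of problem (P2): for every feasible payment vector p one has Σ_i p_i ≥ Σ_i p̄_i. -/
/-! Weak LP duality, with the multiplier `c s / π s` on the opinion constraint. Put
`r i = π i / c i`. For every feasible `p`, `(r s - r i) * (p̄ i - p i) ≤ 0`: before `s` the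
vector `p̄` pays the maximum and `r i ≥ r s`, after `s` it pays nothing and `r i ≤ r s`.
Since `p̄` makes the constraint tight, `∑ r i * p̄ i ≤ ∑ r i * p i`, and adding up gives
`r s * (∑ p̄ - ∑ p) ≤ 0`. -/

open Finset

theorem sum_Iio_add_sum_Ici {ι M : Type*} [AddCommMonoid M] [Fintype ι] [LinearOrder ι]
    [LocallyFiniteOrderBot ι] [LocallyFiniteOrderTop ι] (f : ι → M) (s : ι) :
    ∑ i ∈ Iio s, f i + ∑ i ∈ Ici s, f i = ∑ i, f i := by
  rw [← filter_gt_eq_Iio, ← filter_le_eq_Ici]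
  simp_rw [← not_lt]
  exact sum_filter_add_sum_filter_not univ (· < s) f

theorem sum_le_sum_of_mul_sub_nonpos {ι : Type*} (S : Finset ι) (r q p : ι → ℝ) {μ : ℝ}
    (hμ : 0 < μ) (hpt : ∀ i ∈ S, (μ - r i) * (q i - p i) ≤ 0)
    (hw : ∑ i ∈ S, r i * q i ≤ ∑ i ∈ S, r i * p i) :
    ∑ i ∈ S, q i ≤ ∑ i ∈ S, p i := by
  have hsplit : μ * (∑ i ∈ S, q i - ∑ i ∈ S, p i)
      = ∑ i ∈ S, (μ - r i) * (q i - p i) + (∑ i ∈ S, r i * q i - ∑ i ∈ S, r i * p i) := by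
    simp only [mul_sub, sub_mul, mul_sum, sum_sub_distrib]
    ring
  have : μ * (∑ i ∈ S, q i - ∑ i ∈ S, p i) ≤ 0 := by
    rw [hsplit]
    linarith [sum_nonpos hpt]
  exact sub_nonpos.1 (nonpos_of_mul_nonpos_right this hμ)

theorem mul_sub_nonpos_of_antitone {ι : Type*} [LinearOrder ι] {r : ι → ℝ} (hr : Antitone r)
    {q p : ι → ℝ} {s : ι} (hlt : ∀ i < s, p i ≤ q i) (hgt : ∀ i, s < i → q i ≤ p i) (i : ι) :
    (r s - r i) * (q i - p i) ≤ 0 := by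
  rcases lt_trichotomy i s with his | rfl | hsi
  · exact mul_nonpos_of_nonpos_of_nonneg (sub_nonpos.2 (hr his.le)) (sub_nonneg.2 (hlt i his))
  · simp
  · exact mul_nonpos_of_nonneg_of_nonpos (sub_nonneg.2 (hr hsi.le)) (sub_nonpos.2 (hgt i hsi))

theorem sum_div_mul_eq_of_greedy {ι : Type*} [Fintype ι] [LinearOrder ι]
    [LocallyFiniteOrderBot ι] [LocallyFiniteOrderTop ι] {π c xh q : ι → ℝ} {xstar : ℝ} {s : ι}
    (hπ : π s ≠ 0) (hc : ∀ i, c i ≠ 0)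
    (hlt : ∀ i < s, q i = c i * (1 - xh i))
    (heq : q s = c s / π s *
      (xstar - ∑ i ∈ Iio s, π i - ∑ i ∈ Ici s, π i * xh i))
    (hgt : ∀ i, s < i → q i = 0) :
    ∑ i, π i / c i * q i = xstar - ∑ i, π i * xh i := by
  have hIio : ∑ i ∈ Iio s, π i / c i * q i = ∑ i ∈ Iio s, (π i - π i * xh i) :=
    sum_congr rfl fun i hi => by
      rw [hlt i (mem_Iio.1 hi)]
      field_simp [hc i]
  have hIoi : ∑ i ∈ Ioi s, π i / c i * q i = 0 :=
    sum_eq_zero fun i hi => by rw [hgt i (mem_Ioi.1 hi), mul_zero]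
  have hs : π s / c s * q s = xstar - ∑ i ∈ Iio s, π i - ∑ i ∈ Ici s, π i * xh i := by
    rw [heq]
    field_simp [hc s]
  rw [← sum_Iio_add_sum_Ici, ← add_sum_Ioi_eq_sum_Ici, hIio, hIoi, hs,
    ← sum_Iio_add_sum_Ici (fun i => π i * xh i) s, sum_sub_distrib]
  ring

theorem pbar_optimal_general
    (n : ℕ)
    (π c xh : Fin n → ℝ) (xstar : ℝ)
    (hπpos : ∀ i, 0 < π i)
    (hcpos : ∀ i, 0 < c i)
    (hord : ∀ i j : Fin n, i ≤ j → π j / c j ≤ π i / c i)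
    (s : Fin n)
    (pbar : Fin n → ℝ)
    (hpbar : ∀ j, pbar j =
      if j < s then c j * (1 - xh j)
      else if j = s then
        (c s / π s) *
          (xstar - ∑ i ∈ Finset.Iio s, π i - ∑ i ∈ Finset.Ici s, π i * xh i)
      else 0) :
    ∀ p : Fin n → ℝ,
      (∀ i, 0 ≤ p i) →
      (∀ i, xh i + p i / c i ≤ 1) →
      xstar ≤ ∑ i, π i * (xh i + p i / c i) →
      ∑ i, pbar i ≤ ∑ i, p i := by
  intro p hp0 hp1 hpc
  have hc (i) : c i ≠ 0 := (hcpos i).ne'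
  have hlt : ∀ i < s, pbar i = c i * (1 - xh i) := fun i hi => by simp [hpbar, hi]
  have hgt : ∀ i, s < i → pbar i = 0 := fun i hi => by
    simp [hpbar, hi.ne', not_lt_of_gt hi]
  have hpay : ∑ i, π i * (xh i + p i / c i) = ∑ i, π i * xh i + ∑ i, π i / c i * p i := by
    rw [← sum_add_distrib]
    exact sum_congr rfl fun i _ => by ring
  refine sum_le_sum_of_mul_sub_nonpos univ (fun i => π i / c i) pbar p
    (div_pos (hπpos s) (hcpos s)) (fun i _ => mul_sub_nonpos_of_antitone hord ?_ ?_ i) ?_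
  · intro i hi
    rw [hlt i hi, ← div_le_iff₀' (hcpos i)]
    linarith [hp1 i]
  · intro i hi
    rw [hgt i hi]
    exact hp0 i
  · have hs : pbar s = c s / π s *
        (xstar - ∑ i ∈ Iio s, π i - ∑ i ∈ Ici s, π i * xh i) := by
      rw [hpbar, if_neg (lt_irrefl s), if_pos rfl]
    rw [sum_div_mul_eq_of_greedy (hπpos s).ne' hc hlt hs hgt]
    linarith

/-- The payment vector `p̄` defined via the critical item `s` is an
optimal solution of problem (P2): every feasible payment vector `p` satisfies
`∑ i, p̄ i ≤ ∑ i, p i`. -/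
theorem pbar_optimal
    (n : ℕ) (hn : 1 ≤ n)
    (π c xh : Fin n → ℝ) (xstar : ℝ)
    (hπpos : ∀ i, 0 < π i) (hπsum : ∑ i, π i = 1)
    (hcpos : ∀ i, 0 < c i)
    (hxh : ∀ i, 0 ≤ xh i ∧ xh i ≤ 1)
    (hxstar_lt : ∑ i, π i * xh i < xstar) (hxstar_le : xstar ≤ 1)
    (hord : ∀ i j : Fin n, i ≤ j → π j / c j ≤ π i / c i)
    (s : Fin n)
    (hs : IsLeast {j : Fin n |
      xstar ≤ ∑ i ∈ Finset.Iic j, π i + ∑ i ∈ Finset.Ioi j, π i * xh i} s)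
    (pbar : Fin n → ℝ)
    (hpbar : ∀ j, pbar j =
      if j < s then c j * (1 - xh j)
      else if j = s then
        (c s / π s) *
          (xstar - ∑ i ∈ Finset.Iio s, π i - ∑ i ∈ Finset.Ici s, π i * xh i)
      else 0) :
    ∀ p : Fin n → ℝ,
      (∀ i, 0 ≤ p i) →
      (∀ i, xh i + p i / c i ≤ 1) →
      xstar ≤ ∑ i, π i * (xh i + p i / c i) →
      ∑ i, pbar i ≤ ∑ i, p i :=
  pbar_optimal_general n π c xh xstar hπpos hcpos hord s pbar hpbar
end

section
/- The minimum of Σ_i p_i over all feasible payment vectors p for problem (P2) equals Σ_{j<s} c_j(1 - x̂_j) + (c_s/π_s)(x* - Σ_{j<s} π_j - Σ_{j≥s} π_j x̂_j), where s is the critical item. -/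
/-!
Substituting `t i = p i / c i` turns (P2) into a fractional covering knapsack: minimise
`∑ c i * t i` subject to `0 ≤ t i ≤ 1 - xh i` and `∑ π i * t i ≥ x* - ∑ π i * xh i`.
The greedy vector fills the items of best ratio `π i / c i` completely up to the critical item
`s` and covers the remaining gap with `s`. It is optimal because, with `K = c s / π s`, every
item `i < s` has `c i ≤ K * π i` and every item `i ≥ s` has `K * π i ≤ c i`, so any feasible
`t` pays at least `K` per unit of coverage beyond what the full items `i < s` provide.
-/

open Finset

lemma sum_add_sum_compl_mul {ι : Type*} [Fintype ι] [DecidableEq ι] (A : Finset ι)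
    (a x : ι → ℝ) :
    ∑ i ∈ A, a i + ∑ i ∈ Aᶜ, a i * x i = ∑ i, a i * x i + ∑ i ∈ A, a i * (1 - x i) := by
  rw [← sum_add_sum_compl A (fun i => a i * x i)]
  simp only [mul_sub, mul_one, sum_sub_distrib]
  ring

lemma le_div_mul_of_div_le_div {a b x y : ℝ} (ha : 0 < a) (hb : 0 < b) (hy : 0 < y)
    (h : a / b ≤ x / y) : y ≤ b / a * x := by
  rw [div_le_div_iff₀ hb hy] at h
  rw [div_mul_eq_mul_div, le_div_iff₀ ha]
  linarith

lemma div_mul_le_of_div_le_div {a b x y : ℝ} (ha : 0 < a) (hb : 0 < b) (hy : 0 < y)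
    (h : x / y ≤ a / b) : b / a * x ≤ y := by
  rw [div_le_div_iff₀ hy hb] at h
  rw [div_mul_eq_mul_div, div_le_iff₀ ha]
  linarith

section FracKnapsack

variable {ι : Type*} [LinearOrder ι]

def greedyFill (s : ι) (u : ι → ℝ) (r : ℝ) (i : ι) : ℝ :=
  if i < s then u i else if i = s then r else 0

lemma greedyFill_nonneg {s : ι} {u : ι → ℝ} {r : ℝ} (hu : ∀ i, 0 ≤ u i) (hr : 0 ≤ r)
    (i : ι) : 0 ≤ greedyFill s u r i := by
  unfold greedyFill
  split_ifs <;> simp_all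

lemma greedyFill_le {s : ι} {u : ι → ℝ} {r : ℝ} (hu : ∀ i, 0 ≤ u i) (hr : r ≤ u s)
    (i : ι) : greedyFill s u r i ≤ u i := by
  unfold greedyFill
  split_ifs <;> simp_all

variable [LocallyFiniteOrderBot ι]

lemma sum_Iio_le_of_isLeast [PredOrder ι] {f : ι → ℝ} {D : ℝ} {s : ι} (hD : 0 ≤ D)
    (hs : IsLeast {j | D ≤ ∑ i ∈ Iic j, f i} s) : ∑ i ∈ Iio s, f i ≤ D := by
  by_cases hmin : IsMin s
  · simpa [Iio_eq_empty.2 hmin] using hD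
  · rw [← Iic_pred_eq_Iio_of_not_isMin hmin]
    by_contra! hlt
    exact (Order.pred_lt_of_not_isMin hmin).not_ge (hs.2 hlt.le)

variable [Fintype ι]

def fracKnapsackCosts (π c u : ι → ℝ) (D : ℝ) : Set ℝ :=
  {y | ∃ t : ι → ℝ, (∀ i, 0 ≤ t i) ∧ (∀ i, t i ≤ u i) ∧ D ≤ ∑ i, π i * t i ∧
    y = ∑ i, c i * t i}

lemma sum_mul_greedyFill (w u : ι → ℝ) (s : ι) (r : ℝ) :
    ∑ i, w i * greedyFill s u r i = ∑ i ∈ Iio s, w i * u i + w s * r := by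
  have split : ∀ i, w i * greedyFill s u r i =
      (if i < s then w i * u i else 0) + (if s = i then w s * r else 0) := by
    intro i
    unfold greedyFill
    split_ifs <;> subst_vars <;> simp_all
  rw [sum_congr rfl fun i _ => split i, sum_add_distrib, sum_ite_eq, if_pos (mem_univ s),
    ← sum_filter, filter_gt_eq_Iio]

lemma greedyCost_le_sum_mul {π c u t : ι → ℝ} {s : ι} {K D : ℝ} (hK : 0 ≤ K)
    (hlt : ∀ i < s, c i ≤ K * π i) (hge : ∀ i, s ≤ i → K * π i ≤ c i)
    (ht0 : ∀ i, 0 ≤ t i) (htu : ∀ i, t i ≤ u i) (hD : D ≤ ∑ i, π i * t i) :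
    ∑ i ∈ Iio s, c i * u i + K * (D - ∑ i ∈ Iio s, π i * u i) ≤ ∑ i, c i * t i := by
  have exchange : ∀ i, (if i < s then (c i - K * π i) * u i else 0) + K * (π i * t i)
      ≤ c i * t i := by
    intro i
    split_ifs with hi
    · nlinarith [hlt i hi, htu i]
    · nlinarith [hge i (not_lt.1 hi), ht0 i]
  calc ∑ i ∈ Iio s, c i * u i + K * (D - ∑ i ∈ Iio s, π i * u i)
      = ∑ i ∈ Iio s, (c i - K * π i) * u i + K * D := by
        simp only [sub_mul, mul_assoc, sum_sub_distrib, ← mul_sum]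
        ring
    _ ≤ ∑ i ∈ Iio s, (c i - K * π i) * u i + K * ∑ i, π i * t i := by gcongr
    _ = ∑ i, ((if i < s then (c i - K * π i) * u i else 0) + K * (π i * t i)) := by
        rw [sum_add_distrib, ← sum_filter, filter_gt_eq_Iio, mul_sum]
    _ ≤ ∑ i, c i * t i := sum_le_sum fun i _ => exchange i

theorem isLeast_fracKnapsackCosts [PredOrder ι] {π c u : ι → ℝ} {D : ℝ} {s : ι}
    (hπs : 0 < π s) (hc : ∀ i, 0 < c i) (hu : ∀ i, 0 ≤ u i) (hD : 0 ≤ D)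
    (hord : ∀ i j : ι, i ≤ j → π j / c j ≤ π i / c i)
    (hs : IsLeast {j | D ≤ ∑ i ∈ Iic j, π i * u i} s) :
    IsLeast (fracKnapsackCosts π c u D)
      (∑ i ∈ Iio s, c i * u i + c s / π s * (D - ∑ i ∈ Iio s, π i * u i)) := by
  set r := D - ∑ i ∈ Iio s, π i * u i
  have hr0 : 0 ≤ r := sub_nonneg.2 (sum_Iio_le_of_isLeast hD hs)
  have hru : r ≤ π s * u s := by
    have hcover : D ≤ ∑ i ∈ Iic s, π i * u i := hs.1
    rw [← sum_Iio_add_eq_sum_Iic] at hcover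
    linarith
  refine ⟨⟨greedyFill s u (r / π s), greedyFill_nonneg hu (div_nonneg hr0 hπs.le),
    greedyFill_le hu ((div_le_iff₀' hπs).2 hru), ?_, ?_⟩, ?_⟩
  · rw [sum_mul_greedyFill, mul_div_cancel₀ _ hπs.ne']
    linarith
  · rw [sum_mul_greedyFill]
    ring
  · rintro _ ⟨t, ht0, htu, hcover, rfl⟩
    exact greedyCost_le_sum_mul (div_nonneg (hc s).le hπs.le)
      (fun i hi => le_div_mul_of_div_le_div hπs (hc s) (hc i) (hord i s hi.le))
      (fun i hi => div_mul_le_of_div_le_div hπs (hc s) (hc i) (hord s i hi)) ht0 htu hcover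

end FracKnapsack

lemma setOf_feasible_payment_eq_fracKnapsackCosts {ι : Type*} [Fintype ι]
    {π c xh : ι → ℝ} {xstar : ℝ} (hc : ∀ i, 0 < c i) :
    {y : ℝ | ∃ p : ι → ℝ, (∀ i, 0 ≤ p i) ∧ (∀ i, xh i + p i / c i ≤ 1) ∧
        xstar ≤ ∑ i, π i * (xh i + p i / c i) ∧ y = ∑ i, p i} =
      fracKnapsackCosts π c (fun i => 1 - xh i) (xstar - ∑ i, π i * xh i) := by
  have hsplit : ∀ t : ι → ℝ, ∑ i, π i * (xh i + t i) = ∑ i, π i * xh i + ∑ i, π i * t i := by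
    intro t
    simp only [mul_add, sum_add_distrib]
  ext y
  constructor
  · rintro ⟨p, hp0, hp1, hpD, rfl⟩
    refine ⟨fun i => p i / c i, fun i => div_nonneg (hp0 i) (hc i).le,
      fun i => by linarith [hp1 i], by linarith [hsplit (fun i => p i / c i)], ?_⟩
    simp only [mul_div_cancel₀ _ (hc _).ne']
  · rintro ⟨t, ht0, htu, htD, rfl⟩
    have hpt : ∀ i, c i * t i / c i = t i := fun i => mul_div_cancel_left₀ _ (hc i).ne'
    refine ⟨fun i => c i * t i, fun i => mul_nonneg (hc i).le (ht0 i),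
      fun i => by simp only [hpt]; linarith [htu i], ?_, rfl⟩
    simp only [hpt]
    linarith [hsplit t]

theorem optimal_value_general
    (n : ℕ)
    (π c xh : Fin n → ℝ) (xstar : ℝ)
    (hπpos : ∀ i, 0 < π i)
    (hcpos : ∀ i, 0 < c i)
    (hxh : ∀ i, 0 ≤ xh i ∧ xh i ≤ 1)
    (hxstar_lt : ∑ i, π i * xh i < xstar)
    (hord : ∀ i j : Fin n, i ≤ j → π j / c j ≤ π i / c i)
    (s : Fin n)
    (hs : IsLeast {j : Fin n |
      xstar ≤ ∑ i ∈ Finset.Iic j, π i + ∑ i ∈ Finset.Ioi j, π i * xh i} s) :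
    IsLeast
      {y : ℝ | ∃ p : Fin n → ℝ,
        (∀ i, 0 ≤ p i) ∧
        (∀ i, xh i + p i / c i ≤ 1) ∧
        xstar ≤ ∑ i, π i * (xh i + p i / c i) ∧
        y = ∑ i, p i}
      (∑ j ∈ Finset.Iio s, c j * (1 - xh j) +
        (c s / π s) *
          (xstar - ∑ j ∈ Finset.Iio s, π j - ∑ j ∈ Finset.Ici s, π j * xh j)) := by
  have hfill : ∀ j, ∑ i ∈ Iic j, π i + ∑ i ∈ Ioi j, π i * xh i =
      ∑ i, π i * xh i + ∑ i ∈ Iic j, π i * (1 - xh i) := fun j => by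
    rw [← sum_add_sum_compl_mul (Iic j), show (Iic j)ᶜ = Ioi j by ext; simp]
  have hgap : ∑ i ∈ Iio s, π i + ∑ i ∈ Ici s, π i * xh i =
      ∑ i, π i * xh i + ∑ i ∈ Iio s, π i * (1 - xh i) := by
    rw [← sum_add_sum_compl_mul (Iio s), show (Iio s)ᶜ = Ici s by ext; simp]
  have hcrit : {j : Fin n | xstar ≤ ∑ i ∈ Iic j, π i + ∑ i ∈ Ioi j, π i * xh i} =
      {j | xstar - ∑ i, π i * xh i ≤ ∑ i ∈ Iic j, π i * (1 - xh i)} := by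
    ext j
    simp only [Set.mem_ofPred_eq, hfill, sub_le_iff_le_add']
  rw [hcrit] at hs
  rw [setOf_feasible_payment_eq_fracKnapsackCosts hcpos]
  convert isLeast_fracKnapsackCosts (hπpos s) hcpos (fun i => sub_nonneg.2 (hxh i).2)
    (by linarith) hord hs using 3
  linarith

/-- The minimum of `∑ i, p i` over the feasible payment vectors of
problem (P2) equals
`∑_{j<s} c j (1 - xh j) + (c s / π s) (x* - ∑_{j<s} π j - ∑_{j≥s} π j xh j)`,
where `s` is the critical item. -/
theorem optimal_value
    (n : ℕ) (hn : 1 ≤ n)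
    (π c xh : Fin n → ℝ) (xstar : ℝ)
    (hπpos : ∀ i, 0 < π i) (hπsum : ∑ i, π i = 1)
    (hcpos : ∀ i, 0 < c i)
    (hxh : ∀ i, 0 ≤ xh i ∧ xh i ≤ 1)
    (hxstar_lt : ∑ i, π i * xh i < xstar) (hxstar_le : xstar ≤ 1)
    (hord : ∀ i j : Fin n, i ≤ j → π j / c j ≤ π i / c i)
    (s : Fin n)
    (hs : IsLeast {j : Fin n |
      xstar ≤ ∑ i ∈ Finset.Iic j, π i + ∑ i ∈ Finset.Ioi j, π i * xh i} s) :
    IsLeast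
      {y : ℝ | ∃ p : Fin n → ℝ,
        (∀ i, 0 ≤ p i) ∧
        (∀ i, xh i + p i / c i ≤ 1) ∧
        xstar ≤ ∑ i, π i * (xh i + p i / c i) ∧
        y = ∑ i, p i}
      (∑ j ∈ Finset.Iio s, c j * (1 - xh j) +
        (c s / π s) *
          (xstar - ∑ j ∈ Finset.Iio s, π j - ∑ j ∈ Finset.Ici s, π j * xh j)) :=
  optimal_value_general n π c xh xstar hπpos hcpos hxh hxstar_lt hord s hs
end

section
/- Any optimal solution of problem (P2) is tight: if p* is feasible and Σ_i p*_i ≤ Σ_i p_i for every feasible p, then Σ_i π_i·(x̂_i + p*_i/c_i) = x*. -/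
/-! If the opinion constraint held with slack at an optimal `p*`, the slack would force `p* ≠ 0`,
and shrinking `p*` by the factor `t = (x* - Σ π x̂) / Σ π p*/c < 1` would keep it feasible, make
the constraint tight, and strictly lower the total payment `Σ p*`. -/

open Finset

variable {ι : Type*} [Fintype ι]

lemma sum_mul_add_mul_div (π c xh p : ι → ℝ) (t : ℝ) :
    ∑ i, π i * (xh i + t * p i / c i) = ∑ i, π i * xh i + t * ∑ i, π i * (p i / c i) := by
  rw [mul_sum, ← sum_add_distrib]
  congr 1 with i
  ring

lemma sum_pos_of_lt_sum_mul_add_div {π c xh p : ι → ℝ} (hp : ∀ i, 0 ≤ p i)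
    (h : ∑ i, π i * xh i < ∑ i, π i * (xh i + p i / c i)) : 0 < ∑ i, p i := by
  refine (sum_nonneg fun i _ => hp i).lt_of_ne fun hsum => h.ne ?_
  have hzero := (sum_eq_zero_iff_of_nonneg fun i _ => hp i).1 hsum.symm
  simp [hzero]

lemma add_mul_div_le_add_div {x p c t : ℝ} (hp : 0 ≤ p) (hc : 0 ≤ c) (ht : t ≤ 1) :
    x + t * p / c ≤ x + p / c := by
  gcongr
  exact mul_le_of_le_one_left hp ht

theorem optimal_is_tight_general
    (n : ℕ)
    (π c xh : Fin n → ℝ) (xstar : ℝ)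
    (hcpos : ∀ i, 0 < c i)
    (hxstar_lt : ∑ i, π i * xh i < xstar)
    (pstar : Fin n → ℝ)
    (hfeas : (∀ i, 0 ≤ pstar i) ∧
      (∀ i, xh i + pstar i / c i ≤ 1) ∧
      xstar ≤ ∑ i, π i * (xh i + pstar i / c i))
    (hopt : ∀ p : Fin n → ℝ,
      (∀ i, 0 ≤ p i) →
      (∀ i, xh i + p i / c i ≤ 1) →
      xstar ≤ ∑ i, π i * (xh i + p i / c i) →
      ∑ i, pstar i ≤ ∑ i, p i) :
    ∑ i, π i * (xh i + pstar i / c i) = xstar := by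
  obtain ⟨hp0, hp1, hpge⟩ := hfeas
  refine le_antisymm ?_ hpge
  by_contra! hgt
  set A := ∑ i, π i * xh i
  set S := ∑ i, π i * (pstar i / c i)
  have hsplit : ∑ i, π i * (xh i + pstar i / c i) = A + S := by
    simpa using sum_mul_add_mul_div π c xh pstar 1
  have hcost : 0 < ∑ i, pstar i := sum_pos_of_lt_sum_mul_add_div hp0 (hxstar_lt.trans hgt)
  have hS : 0 < S := by linarith
  set t := (xstar - A) / S
  have ht0 : 0 ≤ t := div_nonneg (by linarith) hS.le
  have ht1 : t < 1 := by rw [div_lt_one hS]; linarith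
  have hle := hopt (fun i => t * pstar i) (fun i => mul_nonneg ht0 (hp0 i))
    (fun i => (add_mul_div_le_add_div (hp0 i) (hcpos i).le ht1.le).trans (hp1 i))
    (by rw [sum_mul_add_mul_div, div_mul_cancel₀ _ hS.ne']; linarith)
  rw [← mul_sum] at hle
  linarith [mul_lt_of_lt_one_left hcost ht1]

/-- Any optimal solution of problem (P2) is tight: if `p*` is
feasible and its total payment is minimal among feasible payment vectors, then
the influence-weighted opinion constraint holds with equality. -/
theorem optimal_is_tight
    (n : ℕ) (hn : 1 ≤ n)
    (π c xh : Fin n → ℝ) (xstar : ℝ)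
    (hπpos : ∀ i, 0 < π i) (hπsum : ∑ i, π i = 1)
    (hcpos : ∀ i, 0 < c i)
    (hxh : ∀ i, 0 ≤ xh i ∧ xh i ≤ 1)
    (hxstar_lt : ∑ i, π i * xh i < xstar) (hxstar_le : xstar ≤ 1)
    (pstar : Fin n → ℝ)
    (hfeas : (∀ i, 0 ≤ pstar i) ∧
      (∀ i, xh i + pstar i / c i ≤ 1) ∧
      xstar ≤ ∑ i, π i * (xh i + pstar i / c i))
    (hopt : ∀ p : Fin n → ℝ,
      (∀ i, 0 ≤ p i) →
      (∀ i, xh i + p i / c i ≤ 1) →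
      xstar ≤ ∑ i, π i * (xh i + p i / c i) →
      ∑ i, pstar i ≤ ∑ i, p i) :
    ∑ i, π i * (xh i + pstar i / c i) = xstar :=
  optimal_is_tight_general n π c xh xstar hcpos hxstar_lt pstar hfeas hopt
end

section
/- Exchange lemma: suppose p is a feasible payment vector and there exist indices ℓ, q with π_ℓ/c_ℓ > π_q/c_q, p_ℓ < c_ℓ(1 - x̂_ℓ), and p_q > 0. Then p is not optimal: there exists a feasible payment vector p' with Σ_i p'_i < Σ_i p_i. -/
/-!
Paying agent `q` one unit less lowers the weighted opinion by `π q / c q`; paying agent `ℓ` a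
fraction `r = (π q / c q) / (π ℓ / c ℓ) < 1` of a unit more restores it exactly. Moving a small
enough amount this way keeps every payment within its bounds and saves `1 - r` per unit moved.
-/

open Finset

section Exchange

variable {ι : Type*} [DecidableEq ι]

theorem forall_add_single_sub_single {P : ι → ℝ → Prop} {p : ι → ℝ} {l q : ι} {a b : ℝ}
    (hlq : l ≠ q) (hp : ∀ i, P i (p i)) (hl : P l (p l + a)) (hq : P q (p q - b)) :
    ∀ i, P i ((p + Pi.single l a - Pi.single q b : ι → ℝ) i) := by
  intro i
  rcases eq_or_ne i l with rfl | hil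
  · simpa [hlq] using hl
  rcases eq_or_ne i q with rfl | hiq
  · simpa [hil] using hq
  simpa [hil, hiq] using hp i

variable [Fintype ι]

theorem sum_mul_add_single_sub_single (w p : ι → ℝ) (l q : ι) (a b : ℝ) :
    ∑ i, w i * (p + Pi.single l a - Pi.single q b : ι → ℝ) i =
      ∑ i, w i * p i + w l * a - w q * b := by
  simp only [Pi.sub_apply, Pi.add_apply, mul_sub, mul_add, sum_sub_distrib, sum_add_distrib,
    ← Pi.single_mul_right_apply, Fintype.sum_pi_single']

theorem exists_cheaper_of_lt_weight {w u p : ι → ℝ} {l q : ι} (hwq : 0 ≤ w q)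
    (hlq : w q < w l) (hp0 : ∀ i, 0 ≤ p i) (hpu : ∀ i, p i ≤ u i) (hl : p l < u l)
    (hq : 0 < p q) :
    ∃ p' : ι → ℝ, (∀ i, 0 ≤ p' i) ∧ (∀ i, p' i ≤ u i) ∧
      ∑ i, w i * p' i = ∑ i, w i * p i ∧ ∑ i, p' i < ∑ i, p i := by
  have hwl : 0 < w l := hwq.trans_lt hlq
  have hne : l ≠ q := by rintro rfl; exact hlq.false
  set r := w q / w l
  have hr0 : 0 ≤ r := div_nonneg hwq hwl.le
  have hr1 : r < 1 := (div_lt_one hwl).2 hlq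
  set δ := min (p q) (u l - p l)
  have hδ : 0 < δ := lt_min hq (sub_pos.2 hl)
  have hrδ : r * δ < δ := mul_lt_of_lt_one_left hδ hr1
  have hδq : δ ≤ p q := min_le_left _ _
  have hδl : δ ≤ u l - p l := min_le_right _ _
  refine ⟨p + Pi.single l (r * δ) - Pi.single q δ, ?_, ?_, ?_, ?_⟩
  · exact forall_add_single_sub_single (P := fun _ x ↦ 0 ≤ x) hne hp0
      (by nlinarith [hp0 l]) (by linarith)
  · exact forall_add_single_sub_single (P := fun i x ↦ x ≤ u i) hne hpu
      (by linarith) (by linarith [hpu q])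
  · have hbalance : w l * (r * δ) = w q * δ := by
      rw [← mul_assoc, mul_div_cancel₀ _ hwl.ne']
    rw [sum_mul_add_single_sub_single, hbalance, add_sub_cancel_right]
  · have hsum := sum_mul_add_single_sub_single 1 p l q (r * δ) δ
    simp only [Pi.one_apply, one_mul] at hsum
    linarith

end Exchange

theorem sum_mul_add_div {ι : Type*} [Fintype ι] (π x p c : ι → ℝ) :
    ∑ i, π i * (x i + p i / c i) = ∑ i, π i * x i + ∑ i, π i / c i * p i := by
  rw [← sum_add_distrib]
  exact sum_congr rfl fun i _ ↦ by ring

theorem add_div_le_one_iff {x p c : ℝ} (hc : 0 < c) : x + p / c ≤ 1 ↔ p ≤ c * (1 - x) := by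
  rw [← le_sub_iff_add_le', div_le_iff₀' hc]

theorem exchange_lemma_general
    (n : ℕ)
    (π c xh : Fin n → ℝ) (xstar : ℝ)
    (hπpos : ∀ i, 0 < π i)
    (hcpos : ∀ i, 0 < c i)
    (p : Fin n → ℝ)
    (hfeas : (∀ i, 0 ≤ p i) ∧
      (∀ i, xh i + p i / c i ≤ 1) ∧
      xstar ≤ ∑ i, π i * (xh i + p i / c i))
    (l q : Fin n)
    (hlq : π q / c q < π l / c l)
    (hl : p l < c l * (1 - xh l))
    (hq : 0 < p q) :
    ∃ p' : Fin n → ℝ,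
      (∀ i, 0 ≤ p' i) ∧
      (∀ i, xh i + p' i / c i ≤ 1) ∧
      xstar ≤ ∑ i, π i * (xh i + p' i / c i) ∧
      ∑ i, p' i < ∑ i, p i := by
  obtain ⟨hp0, hp1, hpsum⟩ := hfeas
  obtain ⟨p', hp'0, hp'1, hweight, hcheaper⟩ :=
    exists_cheaper_of_lt_weight (w := fun i ↦ π i / c i) (u := fun i ↦ c i * (1 - xh i))
      (div_pos (hπpos q) (hcpos q)).le hlq hp0 (fun i ↦ (add_div_le_one_iff (hcpos i)).1 (hp1 i))
      hl hq
  refine ⟨p', hp'0, fun i ↦ (add_div_le_one_iff (hcpos i)).2 (hp'1 i), ?_, hcheaper⟩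
  rwa [sum_mul_add_div, hweight, ← sum_mul_add_div]

/-- Exchange lemma: if `p` is feasible and there are indices
`ℓ, q` with `π ℓ / c ℓ > π q / c q`, `p ℓ < c ℓ * (1 - xh ℓ)` and `p q > 0`,
then `p` is not optimal: some feasible `p'` has strictly smaller total payment. -/
theorem exchange_lemma
    (n : ℕ) (hn : 1 ≤ n)
    (π c xh : Fin n → ℝ) (xstar : ℝ)
    (hπpos : ∀ i, 0 < π i) (hπsum : ∑ i, π i = 1)
    (hcpos : ∀ i, 0 < c i)
    (hxh : ∀ i, 0 ≤ xh i ∧ xh i ≤ 1)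
    (hxstar_lt : ∑ i, π i * xh i < xstar) (hxstar_le : xstar ≤ 1)
    (p : Fin n → ℝ)
    (hfeas : (∀ i, 0 ≤ p i) ∧
      (∀ i, xh i + p i / c i ≤ 1) ∧
      xstar ≤ ∑ i, π i * (xh i + p i / c i))
    (l q : Fin n)
    (hlq : π q / c q < π l / c l)
    (hl : p l < c l * (1 - xh l))
    (hq : 0 < p q) :
    ∃ p' : Fin n → ℝ,
      (∀ i, 0 ≤ p' i) ∧
      (∀ i, xh i + p' i / c i ≤ 1) ∧
      xstar ≤ ∑ i, π i * (xh i + p' i / c i) ∧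
      ∑ i, p' i < ∑ i, p i :=
  exchange_lemma_general n π c xh xstar hπpos hcpos p hfeas l q hlq hl hq
end

section
/- Equilibrium of the best-response dynamics (Theorem 2): assume A has self-confidence, let E_1, …, E_m be the ergodic classes of A, and for each k let π^(k) : Fin n → ℝ be a stationary distribution of A supported on E_k (π^(k)_j ≥ 0, Σ_j π^(k)_j = 1, π^(k)_j = 0 for j ∉ E_k, and Σ_i π^(k)_i A_{ij} = π^(k)_j for all j). Then for every state i and every class k the limit h_i^(k) := lim_{ℓ→∞} Σ_{j∈E_k} (A^ℓ)_{ij} exists, and for every initial opinion vector x : Fin n → ℝ and every state i, lim_{ℓ→∞} ((A^ℓ)x)_i = Σ_{k=1}^m h_i^(k) · Σ_{j∈E_k} π^(k)_j x_j. In particular the limit of the best-response dynamics x(t+1) = A x(t) exists and is unique for each initial condition. -/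
/-!
Inside an ergodic class `E`, self-confidence makes some power `A ^ N` put a mass `δ > 0` on one
fixed state of `E` from every row of `E`, so `A ^ N` shrinks the oscillation over `E` of every
column by the factor `1 - δ` (Doeblin's argument). A stationary `π` supported on `E` keeps `π j`
between the minimum and the maximum of column `j`, hence `(A ^ ℓ) t j → π j` for `t ∈ E`.
The union of the classes is absorbing and is reached from every state, so the mass on transient
states decays geometrically, while the mass `∑ t ∈ E k, (A ^ ℓ) i t` on each class is
nondecreasing. Splitting `A ^ (s + u) = A ^ s * A ^ u` and letting first `u`, then `s` tend to
infinity gives `(A ^ ℓ) i j → ∑ k, h k * π k j`.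
-/

open Finset Filter Topology Matrix

/-- `j` is a consequent of `i` relative to the matrix `A`. -/
def Consequent {n : ℕ} (A : Matrix (Fin n) (Fin n) ℝ) (i j : Fin n) : Prop :=
  ∃ m : ℕ, 1 ≤ m ∧ 0 < (A ^ m) i j

/-- A state is recurrent if it is a consequent of each of its consequents. -/
def Recurrent {n : ℕ} (A : Matrix (Fin n) (Fin n) ℝ) (i : Fin n) : Prop :=
  ∀ j, Consequent A i j → Consequent A j i

open Function

theorem tendsto_zero_of_antitone_of_le_mul {a : ℕ → ℝ} (ha : Antitone a) (ha0 : ∀ ℓ, 0 ≤ a ℓ)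
    {N : ℕ} (hN : 0 < N) {θ : ℝ} (hθ0 : 0 ≤ θ) (hθ1 : θ < 1)
    (hstep : ∀ ℓ, a (N + ℓ) ≤ θ * a ℓ) : Tendsto a atTop (𝓝 0) := by
  have hblock : ∀ s, a (N * s) ≤ θ ^ s * a 0 := by
    intro s
    induction s with
    | zero => simp
    | succ s ih =>
      calc a (N * (s + 1)) = a (N + N * s) := by ring_nf
        _ ≤ θ * a (N * s) := hstep _
        _ ≤ θ * (θ ^ s * a 0) := by gcongr
        _ = θ ^ (s + 1) * a 0 := by ring
  have hdiv : Tendsto (fun ℓ : ℕ => ℓ / N) atTop atTop :=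
    Nat.tendsto_div_const_atTop hN.ne'
  have hgeom : Tendsto (fun ℓ : ℕ => θ ^ (ℓ / N) * a 0) atTop (𝓝 0) := by
    simpa using ((tendsto_pow_atTop_nhds_zero_of_lt_one hθ0 hθ1).comp hdiv).mul_const (a 0)
  exact squeeze_zero ha0 (fun ℓ => (ha (Nat.mul_div_le ℓ N)).trans (hblock _)) hgeom

theorem tendsto_of_forall_tail_near {a b e : ℕ → ℝ} {L : ℝ} (hb : Tendsto b atTop (𝓝 L))
    (he : Tendsto e atTop (𝓝 0))
    (hnear : ∀ s, ∃ c : ℕ → ℝ, Tendsto c atTop (𝓝 (b s)) ∧ ∀ u, |a (s + u) - c u| ≤ e s) :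
    Tendsto a atTop (𝓝 L) := by
  rw [Metric.tendsto_atTop]
  intro ε hε
  have hb' : ∀ᶠ s in atTop, dist (b s) L < ε / 3 := hb (Metric.ball_mem_nhds _ (by positivity))
  have he' : ∀ᶠ s in atTop, e s < ε / 3 := he (gt_mem_nhds (by positivity))
  obtain ⟨s, hbs, hes⟩ := (hb'.and he').exists
  obtain ⟨c, hc, hac⟩ := hnear s
  obtain ⟨U, hU⟩ := Metric.tendsto_atTop.1 hc (ε / 3) (by positivity)
  refine ⟨s + U, fun ℓ hℓ => ?_⟩
  obtain ⟨u, rfl⟩ : ∃ u, ℓ = s + u := ⟨ℓ - s, by omega⟩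
  calc dist (a (s + u)) L ≤ dist (a (s + u)) (c u) + dist (c u) (b s) + dist (b s) L :=
        dist_triangle4 _ _ _ _
    _ < ε := by
      have := hU u (by omega)
      rw [Real.dist_eq (a _)]
      linarith [hac u]

section Absorbing

variable {ι : Type*} {A : Matrix ι ι ℝ} {S : Finset ι}

def IsAbsorbing (A : Matrix ι ι ℝ) (S : Finset ι) : Prop :=
  ∀ i ∈ S, ∀ j ∉ S, A i j = 0

variable [DecidableEq ι]

theorem IsAbsorbing.biUnion {κ : Type*} {s : Finset κ} {E : κ → Finset ι}
    (h : ∀ k ∈ s, IsAbsorbing A (E k)) : IsAbsorbing A (s.biUnion E) := by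
  intro i hi j hj
  obtain ⟨k, hk, hik⟩ := mem_biUnion.1 hi
  exact h k hk i hik j fun hjk => hj (mem_biUnion.2 ⟨k, hk, hjk⟩)

variable [Fintype ι]

theorem IsAbsorbing.pow_apply_eq_zero (hS : IsAbsorbing A S) (ℓ : ℕ) {i j : ι} (hi : i ∈ S)
    (hj : j ∉ S) : (A ^ ℓ) i j = 0 := by
  induction ℓ generalizing j with
  | zero => exact one_apply_ne fun hij => hj (hij ▸ hi)
  | succ ℓ ih =>
    rw [pow_succ, mul_apply]
    refine sum_eq_zero fun t _ => ?_
    by_cases ht : t ∈ S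
    · rw [hS t ht j hj, mul_zero]
    · rw [ih ht, zero_mul]

theorem IsAbsorbing.pow_add_apply (hS : IsAbsorbing A S) (a b : ℕ) {i : ι} (hi : i ∈ S) (j : ι) :
    (A ^ (a + b)) i j = ∑ t ∈ S, (A ^ a) i t * (A ^ b) t j := by
  rw [pow_add, mul_apply, ← sum_subset (subset_univ S)]
  intro t _ ht
  rw [hS.pow_apply_eq_zero a hi ht, zero_mul]

theorem IsAbsorbing.sum_pow_apply (hA : A ∈ rowStochastic ℝ ι) (hS : IsAbsorbing A S) (ℓ : ℕ)
    {i : ι} (hi : i ∈ S) : ∑ t ∈ S, (A ^ ℓ) i t = 1 := by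
  rw [sum_subset (subset_univ S) fun t _ ht => hS.pow_apply_eq_zero ℓ hi ht]
  exact sum_row_of_mem_rowStochastic (pow_mem hA ℓ) i

theorem IsAbsorbing.monotone_sum_pow_apply (hA : A ∈ rowStochastic ℝ ι) (hS : IsAbsorbing A S)
    (i : ι) : Monotone fun ℓ => ∑ j ∈ S, (A ^ ℓ) i j := by
  refine monotone_nat_of_le_succ fun ℓ => ?_
  calc ∑ t ∈ S, (A ^ ℓ) i t = ∑ t ∈ S, (A ^ ℓ) i t * ∑ j ∈ S, A t j :=
        sum_congr rfl fun t ht => by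
          rw [show ∑ j ∈ S, A t j = 1 by simpa using hS.sum_pow_apply hA 1 ht, mul_one]
    _ ≤ ∑ t, (A ^ ℓ) i t * ∑ j ∈ S, A t j :=
        sum_le_sum_of_subset_of_nonneg (subset_univ S) fun t _ _ =>
          mul_nonneg (nonneg_of_mem_rowStochastic (pow_mem hA ℓ))
            (sum_nonneg fun j _ => nonneg_of_mem_rowStochastic hA)
    _ = ∑ j ∈ S, (A ^ (ℓ + 1)) i j := by
        simp only [pow_succ, mul_apply, mul_sum]
        exact sum_comm

theorem IsAbsorbing.exists_tendsto_sum_pow_apply (hA : A ∈ rowStochastic ℝ ι)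
    (hS : IsAbsorbing A S) (i : ι) :
    ∃ h : ℝ, Tendsto (fun ℓ => ∑ j ∈ S, (A ^ ℓ) i j) atTop (𝓝 h) := by
  refine ⟨_, tendsto_atTop_ciSup (hS.monotone_sum_pow_apply hA i) ⟨1, ?_⟩⟩
  rintro _ ⟨ℓ, rfl⟩
  calc ∑ j ∈ S, (A ^ ℓ) i j ≤ ∑ j, (A ^ ℓ) i j :=
        sum_le_sum_of_subset_of_nonneg (subset_univ S) fun j _ _ =>
          nonneg_of_mem_rowStochastic (pow_mem hA ℓ)
    _ = 1 := sum_row_of_mem_rowStochastic (pow_mem hA ℓ) i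

end Absorbing

section Doeblin

variable {ι : Type*} {S : Finset ι}

def oscOn (S : Finset ι) (hS : S.Nonempty) (v : ι → ℝ) : ℝ :=
  S.sup' hS v - S.inf' hS v

theorem oscOn_nonneg {t₀ : ι} (ht₀ : t₀ ∈ S) (v : ι → ℝ) : 0 ≤ oscOn S ⟨t₀, ht₀⟩ v :=
  sub_nonneg.2 ((inf'_le v ht₀).trans (le_sup' v ht₀))

variable [DecidableEq ι]

theorem sum_mul_le_of_le {p v : ι → ℝ} {t₀ : ι} (ht₀ : t₀ ∈ S) {δ M : ℝ}
    (hp : ∀ t ∈ S, 0 ≤ p t) (hp₁ : ∑ t ∈ S, p t = 1) (hδ : δ ≤ p t₀) (hv : ∀ t ∈ S, v t ≤ M) :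
    ∑ t ∈ S, p t * v t ≤ δ * v t₀ + (1 - δ) * M := by
  have hq : ∀ t ∈ S, 0 ≤ p t - if t = t₀ then δ else 0 := by
    intro t ht
    split_ifs with h
    · subst h; linarith
    · linarith [hp t ht]
  calc ∑ t ∈ S, p t * v t = δ * v t₀ + ∑ t ∈ S, (p t - if t = t₀ then δ else 0) * v t := by
        simp [sub_mul, sum_sub_distrib, ite_mul, ht₀]
    _ ≤ δ * v t₀ + ∑ t ∈ S, (p t - if t = t₀ then δ else 0) * M := by
        gcongr with t ht
        · exact hq t ht
        · exact hv t ht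
    _ = δ * v t₀ + (1 - δ) * M := by
        simp [← sum_mul, sum_sub_distrib, hp₁, ht₀]

theorem le_sum_mul_of_le {p v : ι → ℝ} {t₀ : ι} (ht₀ : t₀ ∈ S) {δ m : ℝ}
    (hp : ∀ t ∈ S, 0 ≤ p t) (hp₁ : ∑ t ∈ S, p t = 1) (hδ : δ ≤ p t₀) (hv : ∀ t ∈ S, m ≤ v t) :
    δ * v t₀ + (1 - δ) * m ≤ ∑ t ∈ S, p t * v t := by
  have := sum_mul_le_of_le (v := -v) ht₀ hp hp₁ hδ fun t ht => neg_le_neg (hv t ht)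
  simp only [Pi.neg_apply, mul_neg, sum_neg_distrib] at this
  linarith

variable [Fintype ι] {A : Matrix ι ι ℝ}

theorem vecMul_pow_eq_self {π : ι → ℝ} (hπ : π ᵥ* A = π) (ℓ : ℕ) : π ᵥ* (A ^ ℓ) = π := by
  induction ℓ with
  | zero => simp
  | succ ℓ ih => rw [pow_succ, ← vecMul_vecMul, ih, hπ]

theorem IsAbsorbing.oscOn_pow_mulVec_le (hA : A ∈ rowStochastic ℝ ι) (hS : IsAbsorbing A S)
    {t₀ : ι} (ht₀ : t₀ ∈ S) {K : ℕ} {δ : ℝ} (hδ : ∀ a ∈ S, δ ≤ (A ^ K) a t₀) (v : ι → ℝ) :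
    oscOn S ⟨t₀, ht₀⟩ (A ^ K *ᵥ v) ≤ (1 - δ) * oscOn S ⟨t₀, ht₀⟩ v := by
  have hrow : ∀ a ∈ S, (A ^ K *ᵥ v) a = ∑ t ∈ S, (A ^ K) a t * v t := fun a ha => by
    rw [mulVec, dotProduct, ← sum_subset (subset_univ S) fun t _ ht => by
      rw [hS.pow_apply_eq_zero K ha ht, zero_mul]]
  have hsup : S.sup' ⟨t₀, ht₀⟩ (A ^ K *ᵥ v) ≤ δ * v t₀ + (1 - δ) * S.sup' ⟨t₀, ht₀⟩ v :=
    sup'_le _ _ fun a ha => (hrow a ha).trans_le <| sum_mul_le_of_le ht₀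
      (fun t _ => nonneg_of_mem_rowStochastic (pow_mem hA K)) (hS.sum_pow_apply hA K ha)
      (hδ a ha) fun t ht => le_sup' v ht
  have hinf : δ * v t₀ + (1 - δ) * S.inf' ⟨t₀, ht₀⟩ v ≤ S.inf' ⟨t₀, ht₀⟩ (A ^ K *ᵥ v) :=
    le_inf' _ _ fun a ha => (hrow a ha).symm ▸ le_sum_mul_of_le ht₀
      (fun t _ => nonneg_of_mem_rowStochastic (pow_mem hA K)) (hS.sum_pow_apply hA K ha)
      (hδ a ha) fun t ht => inf'_le v ht
  unfold oscOn
  linarith [mul_sub (1 - δ) (S.sup' ⟨t₀, ht₀⟩ v) (S.inf' ⟨t₀, ht₀⟩ v)]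

theorem IsAbsorbing.tendsto_oscOn_pow_apply (hA : A ∈ rowStochastic ℝ ι) (hS : IsAbsorbing A S)
    {t₀ : ι} (ht₀ : t₀ ∈ S) {N : ℕ} (hN : 0 < N) (hpos : ∀ a ∈ S, 0 < (A ^ N) a t₀) (j : ι) :
    Tendsto (fun ℓ => oscOn S ⟨t₀, ht₀⟩ fun t => (A ^ ℓ) t j) atTop (𝓝 0) := by
  have hstep : ∀ K δ, (∀ a ∈ S, δ ≤ (A ^ K) a t₀) → ∀ ℓ,
      (oscOn S ⟨t₀, ht₀⟩ fun t => (A ^ (K + ℓ)) t j) ≤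
        (1 - δ) * oscOn S ⟨t₀, ht₀⟩ fun t => (A ^ ℓ) t j := by
    intro K δ hδ ℓ
    have hcol : (fun t => (A ^ (K + ℓ)) t j) = A ^ K *ᵥ fun t => (A ^ ℓ) t j := by
      ext t
      rw [pow_add, mul_apply]
      rfl
    rw [hcol]
    exact hS.oscOn_pow_mulVec_le hA ht₀ hδ _
  set δ := S.inf' ⟨t₀, ht₀⟩ fun a => (A ^ N) a t₀
  have hδ₀ : 0 < δ := (lt_inf'_iff _).2 hpos
  have hδ₁ : δ ≤ 1 := (inf'_le _ ht₀).trans (le_one_of_mem_rowStochastic (pow_mem hA N))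
  have hanti : Antitone fun ℓ => oscOn S ⟨t₀, ht₀⟩ fun t => (A ^ ℓ) t j :=
    antitone_nat_of_succ_le fun ℓ => by
      simpa [add_comm] using hstep 1 0 (fun a _ => nonneg_of_mem_rowStochastic (pow_mem hA 1)) ℓ
  exact tendsto_zero_of_antitone_of_le_mul hanti (fun ℓ => oscOn_nonneg ht₀ _) hN
    (by linarith) (by linarith) (hstep N δ fun a ha => inf'_le _ ha)

theorem IsAbsorbing.tendsto_pow_apply_of_doeblin (hA : A ∈ rowStochastic ℝ ι)
    (hS : IsAbsorbing A S) {t₀ : ι} (ht₀ : t₀ ∈ S) {N : ℕ} (hN : 0 < N)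
    (hpos : ∀ a ∈ S, 0 < (A ^ N) a t₀) {π : ι → ℝ} (hπ₀ : ∀ j, 0 ≤ π j) (hπ₁ : ∑ j, π j = 1)
    (hπS : ∀ j ∉ S, π j = 0) (hπA : π ᵥ* A = π) {i : ι} (hi : i ∈ S) (j : ι) :
    Tendsto (fun ℓ => (A ^ ℓ) i j) atTop (𝓝 (π j)) := by
  have hπS₁ : ∑ t ∈ S, π t = 1 := by
    rwa [sum_subset (subset_univ S) fun t _ ht => hπS t ht]
  have hnear : ∀ ℓ, dist ((A ^ ℓ) i j) (π j) ≤ oscOn S ⟨t₀, ht₀⟩ fun t => (A ^ ℓ) t j := by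
    intro ℓ
    set v := fun t => (A ^ ℓ) t j
    have hπ : ∑ t ∈ S, π t * v t = π j := by
      rw [sum_subset (subset_univ S) fun t _ ht => by rw [hπS t ht, zero_mul]]
      exact congrFun (vecMul_pow_eq_self hπA ℓ) j
    have hsup : ∑ t ∈ S, π t * v t ≤ 0 * v t₀ + (1 - 0) * S.sup' ⟨t₀, ht₀⟩ v :=
      sum_mul_le_of_le ht₀ (fun t _ => hπ₀ t) hπS₁ (hπ₀ t₀) fun t ht => le_sup' v ht
    have hinf : 0 * v t₀ + (1 - 0) * S.inf' ⟨t₀, ht₀⟩ v ≤ ∑ t ∈ S, π t * v t :=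
      le_sum_mul_of_le ht₀ (fun t _ => hπ₀ t) hπS₁ (hπ₀ t₀) fun t ht => inf'_le v ht
    rw [hπ] at hsup hinf
    rw [Real.dist_eq, abs_sub_le_iff]
    unfold oscOn
    constructor <;> linarith [le_sup' v hi, inf'_le v hi]
  exact tendsto_iff_dist_tendsto_zero.2 <|
    squeeze_zero (fun _ => dist_nonneg) hnear (hS.tendsto_oscOn_pow_apply hA ht₀ hN hpos j)

end Doeblin

section Transient

variable {ι : Type*} [Fintype ι] [DecidableEq ι] {A : Matrix ι ι ℝ} {R : Finset ι}

theorem IsAbsorbing.sum_compl_pow_add_apply (hR : IsAbsorbing A R) (a b : ℕ) (i : ι) :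
    ∑ j ∈ Rᶜ, (A ^ (a + b)) i j = ∑ t ∈ Rᶜ, (A ^ a) i t * ∑ j ∈ Rᶜ, (A ^ b) t j := by
  have hR₀ : ∀ t ∈ R, ∑ j ∈ Rᶜ, (A ^ b) t j = 0 := fun t ht =>
    sum_eq_zero fun j hj => hR.pow_apply_eq_zero b ht (mem_compl.1 hj)
  calc ∑ j ∈ Rᶜ, (A ^ (a + b)) i j = ∑ t, (A ^ a) i t * ∑ j ∈ Rᶜ, (A ^ b) t j := by
        simp only [pow_add, mul_apply, mul_sum]
        exact sum_comm
    _ = ∑ t ∈ Rᶜ, (A ^ a) i t * ∑ j ∈ Rᶜ, (A ^ b) t j := by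
        rw [← sum_add_sum_compl R, sum_eq_zero fun t ht => by rw [hR₀ t ht, mul_zero], zero_add]

theorem IsAbsorbing.tendsto_sum_compl_pow_apply (hA : A ∈ rowStochastic ℝ ι)
    (hR : IsAbsorbing A R) {N : ℕ} (hN : 0 < N) (hreach : ∀ t, ∃ r ∈ R, 0 < (A ^ N) t r)
    (i : ι) : Tendsto (fun ℓ => ∑ j ∈ Rᶜ, (A ^ ℓ) i j) atTop (𝓝 0) := by
  set q := fun ℓ t => ∑ j ∈ Rᶜ, (A ^ ℓ) t j
  have hR₀ : ∀ ℓ t, 0 ≤ ∑ j ∈ R, (A ^ ℓ) t j := fun ℓ t =>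
    sum_nonneg fun j _ => nonneg_of_mem_rowStochastic (pow_mem hA ℓ)
  have hq : ∀ ℓ t, q ℓ t = 1 - ∑ j ∈ R, (A ^ ℓ) t j := fun ℓ t => by
    rw [eq_sub_iff_add_eq, add_comm, sum_add_sum_compl, sum_row_of_mem_rowStochastic (pow_mem hA ℓ)]
  have hcontract : ∀ b θ, (∀ t, q b t ≤ θ) → ∀ a, q (a + b) i ≤ θ * q a i := by
    intro b θ hθ a
    calc q (a + b) i = ∑ t ∈ Rᶜ, (A ^ a) i t * q b t := hR.sum_compl_pow_add_apply a b i
      _ ≤ ∑ t ∈ Rᶜ, (A ^ a) i t * θ := by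
          gcongr with t
          · exact nonneg_of_mem_rowStochastic (pow_mem hA a)
          · exact hθ t
      _ = θ * q a i := by rw [← sum_mul, mul_comm]
  have hanti : Antitone fun ℓ => q ℓ i := antitone_nat_of_succ_le fun ℓ => by
    simpa using hcontract 1 1 (fun t => by linarith [hq 1 t, hR₀ 1 t]) ℓ
  obtain ⟨t₁, -, ht₁⟩ := exists_max_image univ (q N) ⟨i, mem_univ i⟩
  have hθ : q N t₁ < 1 := by
    obtain ⟨r, hr, hpos⟩ := hreach t₁
    have := single_le_sum (f := fun j => (A ^ N) t₁ j)
      (fun j _ => nonneg_of_mem_rowStochastic (pow_mem hA N)) hr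
    linarith [hq N t₁]
  have hq₀ : ∀ ℓ t, 0 ≤ q ℓ t := fun ℓ t =>
    sum_nonneg fun j _ => nonneg_of_mem_rowStochastic (pow_mem hA ℓ)
  exact tendsto_zero_of_antitone_of_le_mul hanti (hq₀ · i) hN (hq₀ N t₁) hθ fun ℓ => by
    simpa [add_comm] using hcontract N _ (fun t => ht₁ t (mem_univ t)) ℓ

end Transient

theorem tendsto_pow_apply_of_tendsto_classes {ι κ : Type*} [Fintype ι] [DecidableEq ι] [Fintype κ]
    {A : Matrix ι ι ℝ} (hA : A ∈ rowStochastic ℝ ι) {E : κ → Finset ι}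
    (hE : Pairwise (Disjoint on E)) {p : κ → ι → ℝ}
    (hp : ∀ k, ∀ t ∈ E k, ∀ j, Tendsto (fun ℓ => (A ^ ℓ) t j) atTop (𝓝 (p k j)))
    {i : ι} {h : κ → ℝ} (hh : ∀ k, Tendsto (fun ℓ => ∑ t ∈ E k, (A ^ ℓ) i t) atTop (𝓝 (h k)))
    (hT : Tendsto (fun ℓ => ∑ t ∈ (univ.biUnion E)ᶜ, (A ^ ℓ) i t) atTop (𝓝 0)) (j : ι) :
    Tendsto (fun ℓ => (A ^ ℓ) i j) atTop (𝓝 (∑ k, h k * p k j)) := by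
  refine tendsto_of_forall_tail_near (tendsto_finsetSum _ fun k _ => (hh k).mul_const (p k j)) hT
    fun s => ⟨fun u => ∑ k, ∑ t ∈ E k, (A ^ s) i t * (A ^ u) t j, ?_, fun u => ?_⟩
  · simp_rw [sum_mul]
    exact tendsto_finsetSum _ fun k _ => tendsto_finsetSum _ fun t ht =>
      (hp k t ht j).const_mul _
  · have hsplit : (A ^ (s + u)) i j = ∑ k, ∑ t ∈ E k, (A ^ s) i t * (A ^ u) t j +
        ∑ t ∈ (univ.biUnion E)ᶜ, (A ^ s) i t * (A ^ u) t j := by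
      rw [pow_add, mul_apply, ← sum_add_sum_compl (univ.biUnion E),
        sum_biUnion fun k _ k' _ hkk' => hE hkk']
    rw [hsplit, add_sub_cancel_left, abs_of_nonneg (sum_nonneg fun t _ => mul_nonneg
      (nonneg_of_mem_rowStochastic (pow_mem hA s)) (nonneg_of_mem_rowStochastic (pow_mem hA u)))]
    exact sum_le_sum fun t _ => mul_le_of_le_one_right
      (nonneg_of_mem_rowStochastic (pow_mem hA s)) (le_one_of_mem_rowStochastic (pow_mem hA u))

theorem pow_add_apply_pos {ι : Type*} [Fintype ι] [DecidableEq ι] {A : Matrix ι ι ℝ}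
    (hA : ∀ i j, 0 ≤ A i j) {a b : ℕ} {i u t : ι} (h₁ : 0 < (A ^ a) i u) (h₂ : 0 < (A ^ b) u t) :
    0 < (A ^ (a + b)) i t := by
  rw [pow_add, mul_apply]
  exact (mul_pos h₁ h₂).trans_le <| single_le_sum (f := fun v => (A ^ a) i v * (A ^ b) v t)
    (fun v _ => mul_nonneg (pow_apply_nonneg hA a i v) (pow_apply_nonneg hA b v t)) (mem_univ u)

section Consequent

variable {n : ℕ} {A : Matrix (Fin n) (Fin n) ℝ}

theorem consequent_refl (hself : ∀ i, 0 < A i i) (i : Fin n) : Consequent A i i :=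
  ⟨1, le_rfl, by simpa using hself i⟩

theorem Consequent.trans (hA : ∀ i j, 0 ≤ A i j) {i j t : Fin n} (h₁ : Consequent A i j)
    (h₂ : Consequent A j t) : Consequent A i t := by
  obtain ⟨a, ha, ha'⟩ := h₁
  obtain ⟨b, -, hb'⟩ := h₂
  exact ⟨a + b, by omega, pow_add_apply_pos hA ha' hb'⟩

theorem Consequent.eventually_pos (hA : ∀ i j, 0 ≤ A i j) (hself : ∀ i, 0 < A i i)
    {i j : Fin n} (h : Consequent A i j) : ∀ᶠ ℓ in atTop, 0 < (A ^ ℓ) i j := by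
  obtain ⟨m, -, hm⟩ := h
  refine eventually_atTop.2 ⟨m, fun ℓ hℓ => ?_⟩
  induction ℓ, hℓ using Nat.le_induction with
  | base => exact hm
  | succ ℓ _ ih => exact pow_add_apply_pos hA ih (by simpa using hself j)

theorem exists_recurrent_consequent (hA : ∀ i j, 0 ≤ A i j) (hself : ∀ i, 0 < A i i)
    (i : Fin n) : ∃ r, Recurrent A r ∧ Consequent A i r := by
  classical
  -- A consequent of `i` with the fewest consequents is recurrent.
  let F : Fin n → Finset (Fin n) := fun t => univ.filter (Consequent A t)
  have hF : ∀ {t s}, s ∈ F t ↔ Consequent A t s := by simp [F]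
  obtain ⟨r, hir, hmin⟩ := exists_min_image (F i) (fun t => (F t).card)
    ⟨i, hF.2 (consequent_refl hself i)⟩
  refine ⟨r, fun t hrt => ?_, hF.1 hir⟩
  have hsub : F t ⊆ F r := fun s hs => hF.2 (hrt.trans hA (hF.1 hs))
  have heq : F t = F r := eq_of_subset_of_card_le hsub (hmin t (hF.2 ((hF.1 hir).trans hA hrt)))
  exact hF.1 (heq ▸ hF.2 (consequent_refl hself r))

def IsCommunicatingClass (A : Matrix (Fin n) (Fin n) ℝ) (r : Fin n) (E : Finset (Fin n)) :
    Prop :=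
  ∀ j, j ∈ E ↔ Consequent A r j ∧ Consequent A j r

variable {r : Fin n} {E : Finset (Fin n)}

theorem IsCommunicatingClass.mem_self (hE : IsCommunicatingClass A r E)
    (hself : ∀ i, 0 < A i i) : r ∈ E :=
  (hE r).2 ⟨consequent_refl hself r, consequent_refl hself r⟩

theorem IsCommunicatingClass.eq_of_mem (hA : ∀ i j, 0 ≤ A i j) (hE : IsCommunicatingClass A r E)
    {r' : Fin n} {E' : Finset (Fin n)} (hE' : IsCommunicatingClass A r' E') {j : Fin n}
    (hj : j ∈ E) (hj' : j ∈ E') : E = E' := by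
  obtain ⟨hrj, hjr⟩ := (hE j).1 hj
  obtain ⟨hr'j, hjr'⟩ := (hE' j).1 hj'
  ext t
  rw [hE, hE']
  exact ⟨fun ⟨h₁, h₂⟩ => ⟨(hr'j.trans hA hjr).trans hA h₁, h₂.trans hA (hrj.trans hA hjr')⟩,
    fun ⟨h₁, h₂⟩ => ⟨(hrj.trans hA hjr').trans hA h₁, h₂.trans hA (hr'j.trans hA hjr)⟩⟩

theorem IsCommunicatingClass.isAbsorbing (hA : ∀ i j, 0 ≤ A i j) (hE : IsCommunicatingClass A r E)
    (hr : Recurrent A r) : IsAbsorbing A E := by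
  intro a ha b hb
  by_contra hne
  have hab : Consequent A a b := ⟨1, le_rfl, by simpa using (hA a b).lt_of_ne' hne⟩
  obtain ⟨hra, -⟩ := (hE a).1 ha
  exact hb ((hE b).2 ⟨hra.trans hA hab, hr b (hra.trans hA hab)⟩)

theorem IsCommunicatingClass.tendsto_pow_apply (hA : A ∈ rowStochastic ℝ (Fin n))
    (hself : ∀ i, 0 < A i i) (hE : IsCommunicatingClass A r E) (hr : Recurrent A r)
    {π : Fin n → ℝ} (hπ₀ : ∀ j, 0 ≤ π j) (hπ₁ : ∑ j, π j = 1) (hπE : ∀ j ∉ E, π j = 0)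
    (hπA : π ᵥ* A = π) {i : Fin n} (hi : i ∈ E) (j : Fin n) :
    Tendsto (fun ℓ => (A ^ ℓ) i j) atTop (𝓝 (π j)) := by
  have hA₀ : ∀ i j, 0 ≤ A i j := fun _ _ => nonneg_of_mem_rowStochastic hA
  obtain ⟨N, hN, hpos⟩ : ∃ N, 0 < N ∧ ∀ a ∈ E, 0 < (A ^ N) a r :=
    ((eventually_gt_atTop 0).and <| (eventually_all_finset E).2 fun a ha =>
      ((hE a).1 ha).2.eventually_pos hA₀ hself).exists
  exact (hE.isAbsorbing hA₀ hr).tendsto_pow_apply_of_doeblin hA (hE.mem_self hself) hN hpos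
    hπ₀ hπ₁ hπE hπA hi j

theorem tendsto_sum_compl_pow_apply_of_recurrent (hA : A ∈ rowStochastic ℝ (Fin n))
    (hself : ∀ i, 0 < A i i) {R : Finset (Fin n)} (hR : IsAbsorbing A R)
    (hrec : ∀ r, Recurrent A r → r ∈ R) (i : Fin n) :
    Tendsto (fun ℓ => ∑ j ∈ Rᶜ, (A ^ ℓ) i j) atTop (𝓝 0) := by
  have hA₀ : ∀ i j, 0 ≤ A i j := fun _ _ => nonneg_of_mem_rowStochastic hA
  choose r hr hir using exists_recurrent_consequent hA₀ hself
  obtain ⟨N, hN, hpos⟩ : ∃ N, 0 < N ∧ ∀ t, 0 < (A ^ N) t (r t) :=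
    ((eventually_gt_atTop 0).and <| eventually_all.2 fun t =>
      (hir t).eventually_pos hA₀ hself).exists
  exact hR.tendsto_sum_compl_pow_apply hA hN (fun t => ⟨r t, hrec _ (hr t), hpos t⟩) i

end Consequent

theorem best_response_equilibrium_general
    (n : ℕ)
    (A : Matrix (Fin n) (Fin n) ℝ)
    (hA_nonneg : ∀ i j, 0 ≤ A i j)
    (hA_rows : ∀ i, ∑ j, A i j = 1)
    (hself : ∀ i, 0 < A i i)
    (m : ℕ) (E : Fin m → Finset (Fin n))
    (hE_class : ∀ k, ∃ i, Recurrent A i ∧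
      ∀ j, j ∈ E k ↔ (Consequent A i j ∧ Consequent A j i))
    (hE_cover : ∀ i, Recurrent A i → ∃ k, i ∈ E k)
    (hE_inj : Function.Injective E)
    (πk : Fin m → Fin n → ℝ)
    (hπ_nonneg : ∀ k j, 0 ≤ πk k j)
    (hπ_sum : ∀ k, ∑ j, πk k j = 1)
    (hπ_supp : ∀ k, ∀ j ∉ E k, πk k j = 0)
    (hπ_stat : ∀ k j, ∑ i, πk k i * A i j = πk k j) :
    ∀ i : Fin n, ∃ h : Fin m → ℝ,
      (∀ k, Tendsto (fun ℓ : ℕ => ∑ j ∈ E k, (A ^ ℓ) i j) atTop (𝓝 (h k))) ∧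
      ∀ x : Fin n → ℝ,
        Tendsto (fun ℓ : ℕ => ((A ^ ℓ) *ᵥ x) i) atTop
          (𝓝 (∑ k, h k * ∑ j ∈ E k, πk k j * x j)) := by
  intro i
  have hA : A ∈ rowStochastic ℝ (Fin n) := mem_rowStochastic_iff_sum.2 ⟨hA_nonneg, hA_rows⟩
  choose r hr hE using hE_class
  replace hE : ∀ k, IsCommunicatingClass A (r k) (E k) := hE
  have habs : ∀ k, IsAbsorbing A (E k) := fun k => (hE k).isAbsorbing hA_nonneg (hr k)
  have hdisj : Pairwise (Disjoint on E) := fun k k' hkk' => disjoint_left.2 fun j hj hj' =>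
    hkk' (hE_inj ((hE k).eq_of_mem hA_nonneg (hE k') hj hj'))
  have hT := tendsto_sum_compl_pow_apply_of_recurrent hA hself
    (IsAbsorbing.biUnion fun k _ => habs k) (fun t ht => mem_biUnion.2 <|
      (hE_cover t ht).imp fun k hk => ⟨mem_univ k, hk⟩) i
  choose h hh using fun k => (habs k).exists_tendsto_sum_pow_apply hA i
  refine ⟨h, hh, fun x => ?_⟩
  have hentry := tendsto_pow_apply_of_tendsto_classes hA hdisj (fun k t ht j =>
    (hE k).tendsto_pow_apply hA hself (hr k) (hπ_nonneg k) (hπ_sum k) (hπ_supp k)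
      (funext (hπ_stat k)) ht j) hh hT
  have hlim : ∑ k, h k * ∑ j ∈ E k, πk k j * x j = ∑ j, (∑ k, h k * πk k j) * x j := by
    simp_rw [sum_mul, mul_sum, mul_assoc]
    rw [sum_comm]
    refine sum_congr rfl fun k _ => sum_subset (subset_univ _) fun j _ hj => ?_
    rw [hπ_supp k j hj, zero_mul, mul_zero]
  rw [hlim]
  exact tendsto_finsetSum univ fun j _ => (hentry j).mul_const (x j)

/-- Theorem 2: for a row-stochastic matrix `A` with
self-confidence, with ergodic classes `E 1, …, E m` and stationary
distributions `πk k` supported on `E k`, for every state `i` the limits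
`h k = lim_ℓ ∑_{j ∈ E k} (A^ℓ) i j` exist, and for every initial opinion
vector `x`, `lim_ℓ ((A^ℓ) x) i = ∑ k, h k * ∑_{j ∈ E k} πk k j * x j`. -/
theorem best_response_equilibrium
    (n : ℕ) (hn : 1 ≤ n)
    (A : Matrix (Fin n) (Fin n) ℝ)
    (hA_nonneg : ∀ i j, 0 ≤ A i j)
    (hA_rows : ∀ i, ∑ j, A i j = 1)
    (hself : ∀ i, 0 < A i i)
    (m : ℕ) (E : Fin m → Finset (Fin n))
    (hE_class : ∀ k, ∃ i, Recurrent A i ∧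
      ∀ j, j ∈ E k ↔ (Consequent A i j ∧ Consequent A j i))
    (hE_cover : ∀ i, Recurrent A i → ∃ k, i ∈ E k)
    (hE_inj : Function.Injective E)
    (πk : Fin m → Fin n → ℝ)
    (hπ_nonneg : ∀ k j, 0 ≤ πk k j)
    (hπ_sum : ∀ k, ∑ j, πk k j = 1)
    (hπ_supp : ∀ k, ∀ j ∉ E k, πk k j = 0)
    (hπ_stat : ∀ k j, ∑ i, πk k i * A i j = πk k j) :
    ∀ i : Fin n, ∃ h : Fin m → ℝ,
      (∀ k, Tendsto (fun ℓ : ℕ => ∑ j ∈ E k, (A ^ ℓ) i j) atTop (𝓝 (h k))) ∧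
      ∀ x : Fin n → ℝ,
        Tendsto (fun ℓ : ℕ => ((A ^ ℓ) *ᵥ x) i) atTop
          (𝓝 (∑ k, h k * ∑ j ∈ E k, πk k j * x j)) :=
  best_response_equilibrium_general n A hA_nonneg hA_rows hself m E hE_class hE_cover hE_inj πk
    hπ_nonneg hπ_sum hπ_supp hπ_stat
end

section
/- Consensus within an ergodic class: assume A is irreducible (every state is a consequent of every state) and has self-confidence, and let π : Fin n → ℝ be a stationary distribution of A (π_j ≥ 0, Σ_j π_j = 1, Σ_i π_i A_{ij} = π_j for all j). Then lim_{ℓ→∞} (A^ℓ)_{ij} = π_j for all i, j; consequently, for every initial opinion vector x : Fin n → ℝ and every state i, lim_{ℓ→∞} ((A^ℓ)x)_i = Σ_j π_j x_j, so all agents reach the same limiting opinion (a consensus). -/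
/-!
Self-confidence upgrades irreducibility to primitivity: a positive entry of `A ^ m` stays positive
in every higher power, so one power `A ^ M` is entrywise positive, say with entries `≥ δ > 0`.
A row-stochastic matrix replaces each coordinate by an average, so the spread `max x - min x` of
`A ^ ℓ *ᵥ x` never increases, and `A ^ M` shrinks it by the factor `1 - n δ < 1`; hence the spread
tends to `0`. Since `π` is a stationary probability vector, `π ⬝ᵥ (A ^ ℓ *ᵥ x) = π ⬝ᵥ x` lies
between the smallest and the largest coordinate of `A ^ ℓ *ᵥ x`, so every coordinate converges
to `π ⬝ᵥ x`. Taking `x = Pi.single j 1` gives the entries of `A ^ ℓ`.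
-/

open Finset Filter Topology Matrix

namespace Matrix

variable {n R : Type*} [Fintype n] [DecidableEq n] [Ring R] [LinearOrder R]
  [IsStrictOrderedRing R] {A : Matrix n n R}

theorem pow_apply_pos_of_le (hA : ∀ i j, 0 ≤ A i j) (hdiag : ∀ i, 0 < A i i) {i j : n}
    {m m' : ℕ} (hmm' : m ≤ m') (h : 0 < (A ^ m) i j) : 0 < (A ^ m') i j := by
  induction m', hmm' using Nat.le_induction with
  | base => exact h
  | succ m' _ ih =>
    rw [pow_succ', mul_apply]
    calc 0 < A i i * (A ^ m') i j := mul_pos (hdiag i) ih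
      _ ≤ ∑ k, A i k * (A ^ m') k j :=
        single_le_sum (fun k _ => mul_nonneg (hA i k) (pow_apply_nonneg hA m' k j)) (mem_univ i)

theorem IsIrreducible.isPrimitive_of_diag_pos (hA : A.IsIrreducible) (hdiag : ∀ i, 0 < A i i) :
    A.IsPrimitive := by
  choose k _ hk using (isIrreducible_iff_exists_pow_pos hA.nonneg).1 hA
  let M := univ.sup fun p : n × n => k p.1 p.2
  refine ⟨hA.nonneg, max M 1, by omega, fun i j => pow_apply_pos_of_le hA.nonneg hdiag ?_ (hk i j)⟩
  exact (le_sup (f := fun p : n × n => k p.1 p.2) (mem_univ (i, j))).trans (le_max_left _ _)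

end Matrix

theorem tendsto_zero_of_antitone_of_add_le_mul {D : ℕ → ℝ} (hD0 : ∀ ℓ, 0 ≤ D ℓ)
    (hD : Antitone D) (M : ℕ) {c : ℝ} (hc : c < 1) (hstep : ∀ ℓ, D (ℓ + M) ≤ c * D ℓ) :
    Tendsto D atTop (𝓝 0) := by
  have hL := tendsto_atTop_ciInf hD ⟨0, Set.forall_mem_range.2 hD0⟩
  have hL0 : 0 ≤ ⨅ ℓ, D ℓ := ge_of_tendsto' hL hD0
  have hLc : ⨅ ℓ, D ℓ ≤ c * ⨅ ℓ, D ℓ :=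
    le_of_tendsto_of_tendsto' (hL.comp (tendsto_add_atTop_nat M)) (hL.const_mul c) hstep
  have hL_eq : ⨅ ℓ, D ℓ = 0 := by nlinarith
  rwa [hL_eq] at hL

section Spread

variable {n : Type*} [Fintype n]

noncomputable def spread (v : n → ℝ) : ℝ := (⨆ i, v i) - ⨅ i, v i

theorem dotProduct_le_sum_mul_ciSup {w : n → ℝ} (hw : ∀ i, 0 ≤ w i) (v : n → ℝ) :
    w ⬝ᵥ v ≤ (∑ i, w i) * ⨆ i, v i := by
  rw [sum_mul]
  exact sum_le_sum fun i _ =>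
    mul_le_mul_of_nonneg_left (le_ciSup (Finite.bddAbove_range v) i) (hw i)

theorem sum_mul_ciInf_le_dotProduct {w : n → ℝ} (hw : ∀ i, 0 ≤ w i) (v : n → ℝ) :
    (∑ i, w i) * ⨅ i, v i ≤ w ⬝ᵥ v := by
  rw [sum_mul]
  exact sum_le_sum fun i _ =>
    mul_le_mul_of_nonneg_left (ciInf_le (Finite.bddBelow_range v) i) (hw i)

theorem abs_sub_dotProduct_le_spread {w : n → ℝ} (hw0 : ∀ i, 0 ≤ w i) (hw1 : ∑ i, w i = 1)
    (v : n → ℝ) (i : n) : |v i - w ⬝ᵥ v| ≤ spread v := by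
  have hsup := dotProduct_le_sum_mul_ciSup hw0 v
  have hinf := sum_mul_ciInf_le_dotProduct hw0 v
  have hi_sup := le_ciSup (Finite.bddAbove_range v) i
  have hi_inf := ciInf_le (Finite.bddBelow_range v) i
  rw [hw1, one_mul] at hsup hinf
  rw [spread, abs_sub_le_iff]
  constructor <;> linarith

variable [Nonempty n]

theorem spread_nonneg (v : n → ℝ) : 0 ≤ spread v := by
  obtain ⟨i⟩ := ‹Nonempty n›
  exact sub_nonneg.2 <|
    (ciInf_le (Finite.bddBelow_range v) i).trans (le_ciSup (Finite.bddAbove_range v) i)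

variable [DecidableEq n] {B : Matrix n n ℝ}

theorem spread_mulVec_le (hB : B ∈ rowStochastic ℝ n) (v : n → ℝ) :
    spread (B *ᵥ v) ≤ spread v := by
  have hsup : ⨆ i, (B *ᵥ v) i ≤ ⨆ i, v i := ciSup_le fun i => by
    have := dotProduct_le_sum_mul_ciSup (fun k => hB.1 i k) v
    rwa [sum_row_of_mem_rowStochastic hB i, one_mul] at this
  have hinf : ⨅ i, v i ≤ ⨅ i, (B *ᵥ v) i := le_ciInf fun i => by
    have := sum_mul_ciInf_le_dotProduct (fun k => hB.1 i k) v
    rwa [sum_row_of_mem_rowStochastic hB i, one_mul] at this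
  rw [spread, spread]
  linarith

theorem spread_mulVec_le_of_le_apply (hB : B ∈ rowStochastic ℝ n) {δ : ℝ}
    (hδ : ∀ i j, δ ≤ B i j) (v : n → ℝ) :
    spread (B *ᵥ v) ≤ (1 - Fintype.card n * δ) * spread v := by
  set c := 1 - Fintype.card n * δ
  -- the part `δ * ∑ k, v k` is common to all rows, so it cancels in the spread
  have hrow : ∀ i, (B *ᵥ v) i = (fun k => B i k - δ) ⬝ᵥ v + δ * ∑ k, v k := fun i => by
    simp [mulVec, dotProduct, sub_mul, sum_sub_distrib, mul_sum]
  have hw0 : ∀ i k, 0 ≤ B i k - δ := fun i k => sub_nonneg.2 (hδ i k)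
  have hw1 : ∀ i, ∑ k, (B i k - δ) = c := fun i => by
    simp [sum_sub_distrib, sum_row_of_mem_rowStochastic hB i, c]
  have hsup : ⨆ i, (B *ᵥ v) i ≤ c * (⨆ i, v i) + δ * ∑ k, v k := ciSup_le fun i => by
    rw [hrow, ← hw1 i]
    gcongr
    exact dotProduct_le_sum_mul_ciSup (hw0 i) v
  have hinf : c * (⨅ i, v i) + δ * ∑ k, v k ≤ ⨅ i, (B *ᵥ v) i := le_ciInf fun i => by
    rw [hrow, ← hw1 i]
    gcongr
    exact sum_mul_ciInf_le_dotProduct (hw0 i) v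
  rw [spread, spread]
  linarith

theorem Matrix.IsPrimitive.tendsto_spread_pow_mulVec (hB : B ∈ rowStochastic ℝ n)
    (hprim : B.IsPrimitive) (v : n → ℝ) :
    Tendsto (fun ℓ => spread (B ^ ℓ *ᵥ v)) atTop (𝓝 0) := by
  obtain ⟨M, -, hpos⟩ := hprim.exists_pos_pow
  obtain ⟨⟨i₀, j₀⟩, hmin⟩ := Finite.exists_min fun p : n × n => (B ^ M) p.1 p.2
  have hc : 1 - Fintype.card n * (B ^ M) i₀ j₀ < 1 := by
    have := hpos i₀ j₀
    have : (0 : ℝ) < Fintype.card n := by exact_mod_cast Fintype.card_pos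
    nlinarith
  refine tendsto_zero_of_antitone_of_add_le_mul (fun _ => spread_nonneg _)
    (antitone_nat_of_succ_le fun ℓ => ?_) M hc fun ℓ => ?_
  · rw [pow_succ', ← mulVec_mulVec]
    exact spread_mulVec_le hB _
  · rw [pow_add, ← pow_mul_comm, ← mulVec_mulVec]
    exact spread_mulVec_le_of_le_apply (pow_mem hB M) (fun i j => hmin (i, j)) _

end Spread

theorem Matrix.IsPrimitive.tendsto_pow_mulVec_apply {n : Type*} [Fintype n] [DecidableEq n]
    {A : Matrix n n ℝ} (hA : A ∈ rowStochastic ℝ n) (hprim : A.IsPrimitive) {π : n → ℝ}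
    (hπ0 : ∀ i, 0 ≤ π i) (hπ1 : ∑ i, π i = 1) (hπA : π ᵥ* A = π) (x : n → ℝ) (i : n) :
    Tendsto (fun ℓ => (A ^ ℓ *ᵥ x) i) atTop (𝓝 (π ⬝ᵥ x)) := by
  have : Nonempty n := ⟨i⟩
  have hπAℓ : ∀ ℓ, π ᵥ* A ^ ℓ = π := fun ℓ => by
    induction ℓ with
    | zero => simp
    | succ ℓ ih => rw [pow_succ, ← vecMul_vecMul, ih, hπA]
  rw [tendsto_iff_norm_sub_tendsto_zero]
  refine squeeze_zero (fun _ => norm_nonneg _) (fun ℓ => ?_) (hprim.tendsto_spread_pow_mulVec hA x)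
  rw [Real.norm_eq_abs, ← hπAℓ ℓ, ← dotProduct_mulVec]
  exact abs_sub_dotProduct_le_spread hπ0 hπ1 _ i

theorem consensus_irreducible_general
    (n : ℕ)
    (A : Matrix (Fin n) (Fin n) ℝ)
    (hA_nonneg : ∀ i j, 0 ≤ A i j)
    (hA_rows : ∀ i, ∑ j, A i j = 1)
    (hself : ∀ i, 0 < A i i)
    (hirr : ∀ i j, Consequent A i j)
    (π : Fin n → ℝ)
    (hπ_nonneg : ∀ j, 0 ≤ π j)
    (hπ_sum : ∑ j, π j = 1)
    (hπ_stat : ∀ j, ∑ i, π i * A i j = π j) :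
    (∀ i j, Tendsto (fun ℓ : ℕ => (A ^ ℓ) i j) atTop (𝓝 (π j))) ∧
    (∀ x : Fin n → ℝ, ∀ i,
      Tendsto (fun ℓ : ℕ => ((A ^ ℓ) *ᵥ x) i) atTop (𝓝 (∑ j, π j * x j))) := by
  have hstoch : A ∈ rowStochastic ℝ (Fin n) := mem_rowStochastic_iff_sum.2 ⟨hA_nonneg, hA_rows⟩
  have hirreducible : A.IsIrreducible := (isIrreducible_iff_exists_pow_pos hA_nonneg).2 hirr
  have hconsensus := (hirreducible.isPrimitive_of_diag_pos hself).tendsto_pow_mulVec_apply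
    hstoch hπ_nonneg hπ_sum (funext hπ_stat)
  refine ⟨fun i j => ?_, hconsensus⟩
  simpa using hconsensus (Pi.single j 1) i

/-- Consensus within an ergodic class: if `A` is irreducible,
row-stochastic and has self-confidence, and `π` is a stationary distribution
of `A`, then `(A^ℓ) i j → π j` for all `i, j`, and consequently for every
initial opinion vector `x` and state `i`, `((A^ℓ) x) i → ∑ j, π j * x j`:
all agents reach the same limiting opinion. -/
theorem consensus_irreducible
    (n : ℕ) (hn : 1 ≤ n)
    (A : Matrix (Fin n) (Fin n) ℝ)
    (hA_nonneg : ∀ i j, 0 ≤ A i j)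
    (hA_rows : ∀ i, ∑ j, A i j = 1)
    (hself : ∀ i, 0 < A i i)
    (hirr : ∀ i j, Consequent A i j)
    (π : Fin n → ℝ)
    (hπ_nonneg : ∀ j, 0 ≤ π j)
    (hπ_sum : ∑ j, π j = 1)
    (hπ_stat : ∀ j, ∑ i, π i * A i j = π j) :
    (∀ i j, Tendsto (fun ℓ : ℕ => (A ^ ℓ) i j) atTop (𝓝 (π j))) ∧
    (∀ x : Fin n → ℝ, ∀ i,
      Tendsto (fun ℓ : ℕ => ((A ^ ℓ) *ᵥ x) i) atTop (𝓝 (∑ j, π j * x j))) :=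
  consensus_irreducible_general n A hA_nonneg hA_rows hself hirr π hπ_nonneg hπ_sum hπ_stat
end
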